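/- For the equality relation on D abstracted by m : D → D̂: Type I holds on (â, b̂) iff m⁻¹(â) = m⁻¹(b̂) and this common preimage is a singleton; Type II holds iff m⁻¹(â) and m⁻¹(b̂) are nonempty and disjoint; Type III holds iff m⁻¹(â) ∩ m⁻¹(b̂) ≠ ∅ and (m⁻¹(â) ∪ m⁻¹(b̂)) has at least two elements. -/

import Mathlib

def eqHat {D Dh : Type*} (m : D → Dh) (ah bh : Dh) : Prop :=
  ∃ x y : D, m x = ah ∧ m y = bh ∧ x = y

def negEqHat {D Dh : Type*} (m : D → Dh) (ah bh : Dh) : Prop :=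
  ∃ x y : D, m x = ah ∧ m y = bh ∧ x ≠ y

/-! The existential abstractions of `=` and `≠` only see the fibres `A = m⁻¹{â}` and
`B = m⁻¹{b̂}`: `=̂` says that `A ∩ B` is nonempty, and `≠̂` that some `x ∈ A` and `y ∈ B`
differ. Each type is then a statement about two sets. Fixing a common point `c`, the failure
of `≠̂` forces `A = B = {c}`, while any point of `A ∪ B` other than `c` pairs with `c` to
witness `≠̂`. -/

namespace Set

variable {α : Type*} {A B : Set α}

theorem inter_nonempty_and_not_exists_ne_iff :
    (A ∩ B).Nonempty ∧ ¬ (∃ x ∈ A, ∃ y ∈ B, x ≠ y) ↔ A = B ∧ ∃ d, A = {d} := by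
  constructor
  · rintro ⟨⟨c, hcA, hcB⟩, h⟩
    push Not at h
    have hA : A = {c} := eq_singleton_iff_unique_mem.2 ⟨hcA, fun x hx => h x hx c hcB⟩
    have hB : B = {c} := eq_singleton_iff_unique_mem.2 ⟨hcB, fun y hy => (h c hcA y hy).symm⟩
    exact ⟨hA.trans hB.symm, c, hA⟩
  · rintro ⟨rfl, d, rfl⟩
    simp

theorem exists_ne_and_not_inter_nonempty_iff :
    (∃ x ∈ A, ∃ y ∈ B, x ≠ y) ∧ ¬ (A ∩ B).Nonempty ↔
      A.Nonempty ∧ B.Nonempty ∧ Disjoint A B := by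
  rw [not_nonempty_iff_eq_empty, ← disjoint_iff_inter_eq_empty]
  constructor
  · rintro ⟨⟨x, hx, y, hy, -⟩, hAB⟩
    exact ⟨⟨x, hx⟩, ⟨y, hy⟩, hAB⟩
  · rintro ⟨⟨x, hx⟩, ⟨y, hy⟩, hAB⟩
    exact ⟨⟨x, hx, y, hy, hAB.ne_of_mem hx hy⟩, hAB⟩

theorem exists_ne_iff_union_nontrivial {c : α} (hcA : c ∈ A) (hcB : c ∈ B) :
    (∃ x ∈ A, ∃ y ∈ B, x ≠ y) ↔ (A ∪ B).Nontrivial := by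
  constructor
  · rintro ⟨x, hx, y, hy, hxy⟩
    exact ⟨x, Or.inl hx, y, Or.inr hy, hxy⟩
  · intro h
    obtain ⟨x, hx | hx, hxc⟩ := h.exists_ne c
    · exact ⟨x, hx, c, hcB, hxc⟩
    · exact ⟨c, hcA, x, hx, hxc.symm⟩

theorem inter_nonempty_and_exists_ne_iff :
    (A ∩ B).Nonempty ∧ (∃ x ∈ A, ∃ y ∈ B, x ≠ y) ↔ (A ∩ B).Nonempty ∧ (A ∪ B).Nontrivial :=
  and_congr_right fun ⟨_, hcA, hcB⟩ => exists_ne_iff_union_nontrivial hcA hcB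

end Set

section

variable {D Dh : Type*} (m : D → Dh) (ah bh : Dh)

theorem eqHat_iff : eqHat m ah bh ↔ (m ⁻¹' {ah} ∩ m ⁻¹' {bh}).Nonempty :=
  ⟨fun ⟨x, _, hx, hy, hxy⟩ => ⟨x, hx, hxy ▸ hy⟩, fun ⟨x, hx, hy⟩ => ⟨x, x, hx, hy, rfl⟩⟩

theorem negEqHat_iff : negEqHat m ah bh ↔ ∃ x ∈ m ⁻¹' {ah}, ∃ y ∈ m ⁻¹' {bh}, x ≠ y :=
  ⟨fun ⟨x, y, hx, hy, hxy⟩ => ⟨x, hx, y, hy, hxy⟩, fun ⟨x, hx, y, hy, hxy⟩ => ⟨x, y, hx, hy, hxy⟩⟩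

end

theorem stmt_17_general {D Dh : Type*} (m : D → Dh) (ah bh : Dh) :
    ((eqHat m ah bh ∧ ¬ negEqHat m ah bh) ↔
      (m ⁻¹' {ah} = m ⁻¹' {bh} ∧ ∃ d : D, m ⁻¹' {ah} = {d})) ∧
    ((negEqHat m ah bh ∧ ¬ eqHat m ah bh) ↔
      ((m ⁻¹' {ah}).Nonempty ∧ (m ⁻¹' {bh}).Nonempty ∧
        Disjoint (m ⁻¹' {ah}) (m ⁻¹' {bh}))) ∧
    ((eqHat m ah bh ∧ negEqHat m ah bh) ↔
      ((m ⁻¹' {ah} ∩ m ⁻¹' {bh}).Nonempty ∧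
        ∃ x ∈ m ⁻¹' {ah} ∪ m ⁻¹' {bh}, ∃ y ∈ m ⁻¹' {ah} ∪ m ⁻¹' {bh}, x ≠ y)) := by
  rw [eqHat_iff, negEqHat_iff]
  exact ⟨Set.inter_nonempty_and_not_exists_ne_iff, Set.exists_ne_and_not_inter_nonempty_iff,
    Set.inter_nonempty_and_exists_ne_iff⟩

/-- Characterization of the types of the abstracted equality relation. -/
theorem stmt_17 {D Dh : Type*} (m : D → Dh) (ah bh : Dh)
    (hna : (m ⁻¹' {ah}).Nonempty) (hnb : (m ⁻¹' {bh}).Nonempty) :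
    ((eqHat m ah bh ∧ ¬ negEqHat m ah bh) ↔
      (m ⁻¹' {ah} = m ⁻¹' {bh} ∧ ∃ d : D, m ⁻¹' {ah} = {d})) ∧
    ((negEqHat m ah bh ∧ ¬ eqHat m ah bh) ↔
      ((m ⁻¹' {ah}).Nonempty ∧ (m ⁻¹' {bh}).Nonempty ∧
        Disjoint (m ⁻¹' {ah}) (m ⁻¹' {bh}))) ∧
    ((eqHat m ah bh ∧ negEqHat m ah bh) ↔
      ((m ⁻¹' {ah} ∩ m ⁻¹' {bh}).Nonempty ∧
        ∃ x ∈ m ⁻¹' {ah} ∪ m ⁻¹' {bh}, ∃ y ∈ m ⁻¹' {ah} ∪ m ⁻¹' {bh}, x ≠ y)) :=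
  stmt_17_general m ah bh
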